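/- arXiv:2603.17578 — 2 statements merged into one kernel-verified Lean document; each statement's English description precedes it below -/
import Mathlib

section
/- The inverse dual S lex-cel solution R^IDSL satisfies neutrality (NT), concatenation consistency (CCON), and all indifference all winners (AIAW), but does not satisfy independence of the addition of the worst sets (IAWS). -/
namespace SocRank

/-- A coalitional ranking (a weak order on a set of feasible nonempty coalitions),
represented by its list of equivalence classes, listed from best to worst. -/
structure CoalRanking (X : Type*) where
  classes : List (Finset (Finset X))
  class_nonempty : ∀ C ∈ classes, C.Nonempty
  coal_nonempty : ∀ C ∈ classes, ∀ S ∈ C, S.Nonempty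
  classes_disjoint : classes.Pairwise Disjoint

namespace CoalRanking

variable {X : Type*}

/-- The coalition domain `𝒟(≿)` of a coalitional ranking. -/
def domain [DecidableEq X] (r : CoalRanking X) : Finset (Finset X) :=
  r.classes.foldr (· ∪ ·) ∅

/-- The list of equivalence classes of the restriction of a ranking to a set `D`
of coalitions. -/
def restrictClasses [DecidableEq X] (r : CoalRanking X) (D : Finset (Finset X)) :
    List (Finset (Finset X)) :=
  (r.classes.map (· ∩ D)).filter (fun C => decide C.Nonempty)

/-- Merging two lists of equivalence classes by aligning them at the top. -/
def zipUnion [DecidableEq X] :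
    List (Finset (Finset X)) → List (Finset (Finset X)) → List (Finset (Finset X))
  | [], M => M
  | L, [] => L
  | A :: L, B :: M => (A ∪ B) :: zipUnion L M

/-- `r` is a sum of the disjoint rankings `r₁` and `r₂`: its domain is the union of
the two domains and its restriction to the domain of `rᵢ` is `rᵢ`. -/
def IsSum [DecidableEq X] (r r₁ r₂ : CoalRanking X) : Prop :=
  Disjoint r₁.domain r₂.domain ∧
  r.domain = r₁.domain ∪ r₂.domain ∧
  r.restrictClasses r₁.domain = r₁.classes ∧
  r.restrictClasses r₂.domain = r₂.classes

/-- `r` is the concatenation sum `r₁ · r₂` of the disjoint rankings `r₁` and `r₂`. -/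
def IsConcatSum [DecidableEq X] (r r₁ r₂ : CoalRanking X) : Prop :=
  Disjoint r₁.domain r₂.domain ∧ r.classes = r₁.classes ++ r₂.classes

/-- `r` is the top-aligned sum `r₁ ⊨ r₂` of the disjoint rankings `r₁` and `r₂`. -/
def IsTopAlignedSum [DecidableEq X] (r r₁ r₂ : CoalRanking X) : Prop :=
  Disjoint r₁.domain r₂.domain ∧ r.classes = zipUnion r₁.classes r₂.classes

/-- `r` is the bottom-aligned sum `r₁ ⫤ r₂` of the disjoint rankings `r₁` and `r₂`. -/
def IsBottomAlignedSum [DecidableEq X] (r r₁ r₂ : CoalRanking X) : Prop :=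
  Disjoint r₁.domain r₂.domain ∧
  r.classes = (zipUnion r₁.classes.reverse r₂.classes.reverse).reverse

/-- Renaming the individuals of a coalitional ranking by a permutation `σ` of `X`:
the ranking `≿^σ`. -/
def mapPerm [DecidableEq X] (σ : Equiv.Perm X) (r : CoalRanking X) : CoalRanking X where
  classes := r.classes.map (fun C => C.image (fun S => S.image σ))
  class_nonempty := by
    intro C hC
    simp only [List.mem_map] at hC
    obtain ⟨C₀, hC₀, rfl⟩ := hC
    exact (r.class_nonempty C₀ hC₀).image _
  coal_nonempty := by
    intro C hC S hS
    simp only [List.mem_map] at hC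
    obtain ⟨C₀, hC₀, rfl⟩ := hC
    simp only [Finset.mem_image] at hS
    obtain ⟨S₀, hS₀, rfl⟩ := hS
    exact (r.coal_nonempty C₀ hC₀ S₀ hS₀).image _
  classes_disjoint := by
    refine List.Pairwise.map _ (fun {A B} h => ?_) r.classes_disjoint
    exact (Finset.disjoint_image
      (Finset.image_injective σ.injective)).mpr h

/-- Renaming the coalitions of a coalitional ranking by a permutation `π` of the set of
coalitions (mapping nonempty sets to nonempty sets): the ranking `≿_π`. -/
def mapCoalPerm [DecidableEq X] (π : Equiv.Perm (Finset X))
    (hπ : ∀ S : Finset X, S.Nonempty → (π S).Nonempty) (r : CoalRanking X) :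
    CoalRanking X where
  classes := r.classes.map (fun C => C.image π)
  class_nonempty := by
    intro C hC
    simp only [List.mem_map] at hC
    obtain ⟨C₀, hC₀, rfl⟩ := hC
    exact (r.class_nonempty C₀ hC₀).image _
  coal_nonempty := by
    intro C hC S hS
    simp only [List.mem_map] at hC
    obtain ⟨C₀, hC₀, rfl⟩ := hC
    simp only [Finset.mem_image] at hS
    obtain ⟨S₀, hS₀, rfl⟩ := hS
    exact hπ S₀ (r.coal_nonempty C₀ hC₀ S₀ hS₀)
  classes_disjoint := by
    refine List.Pairwise.map _ (fun {A B} h => ?_) r.classes_disjoint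
    exact (Finset.disjoint_image π.injective).mpr h

end CoalRanking

open CoalRanking

variable {X : Type*}

/-- A social ranking solution: a map assigning to every coalitional ranking a binary
relation on the individuals. -/
abbrev SRSMap (X : Type*) := CoalRanking X → X → X → Prop

/-- The symmetric part `I` of the social ranking. -/
def Ind (R : SRSMap X) (r : CoalRanking X) (x y : X) : Prop := R r x y ∧ R r y x

/-- The asymmetric part `P` of the social ranking. -/
def Pref (R : SRSMap X) (r : CoalRanking X) (x y : X) : Prop := R r x y ∧ ¬ R r y x

/-- Conditions (1)-(4) of consistency for the triple `(r₁, r₂, r)`. -/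
def ConsistentAt (R : SRSMap X) (r₁ r₂ r : CoalRanking X) : Prop :=
  ∀ x y : X,
    (Ind R r₁ x y → Ind R r₂ x y → Ind R r x y) ∧
    (Ind R r₁ x y → Pref R r₂ x y → Pref R r x y) ∧
    (Pref R r₁ x y → Ind R r₂ x y → Pref R r x y) ∧
    (Pref R r₁ x y → Pref R r₂ x y → Pref R r x y)

/-- Consistency (CON). -/
def CON [DecidableEq X] (R : SRSMap X) : Prop :=
  ∀ r₁ r₂ r : CoalRanking X, IsSum r r₁ r₂ → ConsistentAt R r₁ r₂ r

/-- Concatenation consistency (CCON). -/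
def CCON [DecidableEq X] (R : SRSMap X) : Prop :=
  ∀ r₁ r₂ r : CoalRanking X, IsConcatSum r r₁ r₂ → ConsistentAt R r₁ r₂ r

/-- Top-aligned consistency (TCON). -/
def TCON [DecidableEq X] (R : SRSMap X) : Prop :=
  ∀ r₁ r₂ r : CoalRanking X, IsTopAlignedSum r r₁ r₂ → ConsistentAt R r₁ r₂ r

/-- Bottom-aligned consistency (BCON). -/
def BCON [DecidableEq X] (R : SRSMap X) : Prop :=
  ∀ r₁ r₂ r : CoalRanking X, IsBottomAlignedSum r r₁ r₂ → ConsistentAt R r₁ r₂ r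

/-- II-concatenation consistency. -/
def IICCON [DecidableEq X] (R : SRSMap X) : Prop :=
  ∀ r₁ r₂ r : CoalRanking X, IsConcatSum r r₁ r₂ →
    ∀ x y : X, Ind R r₁ x y → Ind R r₂ x y → Ind R r x y

/-- IP-concatenation consistency. -/
def IPCCON [DecidableEq X] (R : SRSMap X) : Prop :=
  ∀ r₁ r₂ r : CoalRanking X, IsConcatSum r r₁ r₂ →
    ∀ x y : X, Ind R r₁ x y → Pref R r₂ x y → Pref R r x y

/-- PI-concatenation consistency. -/
def PICCON [DecidableEq X] (R : SRSMap X) : Prop :=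
  ∀ r₁ r₂ r : CoalRanking X, IsConcatSum r r₁ r₂ →
    ∀ x y : X, Pref R r₁ x y → Ind R r₂ x y → Pref R r x y

/-- PP-concatenation consistency. -/
def PPCCON [DecidableEq X] (R : SRSMap X) : Prop :=
  ∀ r₁ r₂ r : CoalRanking X, IsConcatSum r r₁ r₂ →
    ∀ x y : X, Pref R r₁ x y → Pref R r₂ x y → Pref R r x y

/-- `x_k`: the number of coalitions of the class `C` containing `x`. -/
def cnt [DecidableEq X] (x : X) (C : Finset (Finset X)) : ℕ :=
  (C.filter (fun S => x ∈ S)).card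

/-- The vector `θ_≿(x) = (x₁, …, x_l)`. -/
def theta [DecidableEq X] (r : CoalRanking X) (x : X) : List ℕ :=
  r.classes.map (cnt x)

/-- `sign`: `1` on positive numbers, `0` otherwise. -/
def sgn (n : ℕ) : ℕ := if 0 < n then 1 else 0

/-- The vector `θ̇_≿(x) = (sign(x₁), …, sign(x_l))`. -/
def thetaDot [DecidableEq X] (r : CoalRanking X) (x : X) : List ℕ :=
  (theta r x).map sgn

/-- The lexicographic order `≥^L` on vectors (of equal length). -/
def lexGE : List ℕ → List ℕ → Prop
  | _, [] => True
  | [], _ :: _ => False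
  | a :: as, b :: bs => b < a ∨ (a = b ∧ lexGE as bs)

/-- The lexicographic excellence solution (lex-cel) `R^L`. -/
def lexcel [DecidableEq X] : SRSMap X := fun r x y => lexGE (theta r x) (theta r y)

/-- The sign lexicographic excellence solution (S lex-cel) `R^{SL}`. -/
def slexcel [DecidableEq X] : SRSMap X := fun r x y => lexGE (thetaDot r x) (thetaDot r y)

/-- The plurality solution `R^P`. -/
def plurality [DecidableEq X] : SRSMap X := fun r x y =>
  (theta r y).headD 0 ≤ (theta r x).headD 0

/-- The sign plurality solution `R^{SP}`. -/
def splurality [DecidableEq X] : SRSMap X := fun r x y =>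
  sgn ((theta r y).headD 0) ≤ sgn ((theta r x).headD 0)

/-- The anti-plurality solution `R^{AP}`. -/
def antiplurality [DecidableEq X] : SRSMap X := fun r x y =>
  (theta r x).getLastD 0 ≤ (theta r y).getLastD 0

/-- `e_≿(x)`: the largest `k` such that `x` belongs to every coalition of each of the
first `k` equivalence classes. -/
def eIIS [DecidableEq X] (r : CoalRanking X) (x : X) : ℕ :=
  (r.classes.takeWhile (fun C => decide (∀ S ∈ C, x ∈ S))).length

/-- The intersection initial segment solution (IIS) `R^{IIS}`. -/
def iis [DecidableEq X] : SRSMap X := fun r x y => eIIS r y ≤ eIIS r x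

/-- The index of the equivalence class a coalition belongs to. -/
def classIdx [DecidableEq X] (r : CoalRanking X) (S : Finset X) : ℕ :=
  r.classes.findIdx (fun C => decide (S ∈ C))

/-- `C_{xy}`: the number of CP comparisons in favour of `x` against `y`. -/
def cpCount [DecidableEq X] [Fintype X] (r : CoalRanking X) (x y : X) : ℕ :=
  ((Finset.univ : Finset (Finset X)).filter (fun S =>
    S.Nonempty ∧ x ∉ S ∧ y ∉ S ∧ insert x S ∈ r.domain ∧ insert y S ∈ r.domain ∧
    classIdx r (insert x S) < classIdx r (insert y S))).card

/-- The Ceteris Paribus majority solution `R^{CPM}`. -/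
def cpm [DecidableEq X] [Fintype X] : SRSMap X := fun r x y =>
  cpCount r y x ≤ cpCount r x y

/-- Neutrality (NT). -/
def NT [DecidableEq X] (R : SRSMap X) : Prop :=
  ∀ (σ : Equiv.Perm X) (r : CoalRanking X) (x y : X),
    R (r.mapPerm σ) (σ x) (σ y) ↔ R r x y

/-- Weak coalitional anonymity (WCA). -/
def WCA [DecidableEq X] (R : SRSMap X) : Prop :=
  ∀ (x y : X) (π : Equiv.Perm (Finset X))
    (hπ : ∀ S : Finset X, S.Nonempty → (π S).Nonempty),
    (∀ S : Finset X, x ∈ S → x ∈ π S) → (∀ S : Finset X, y ∈ S → y ∈ π S) →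
    ∀ r : CoalRanking X,
      (R (r.mapCoalPerm π hπ) x y ↔ R r x y) ∧ (R (r.mapCoalPerm π hπ) y x ↔ R r y x)

/-- The weak union very important person property (WUVIP). -/
def WUVIP (R : SRSMap X) : Prop :=
  ∀ (r : CoalRanking X) (A B : Finset (Finset X)), r.classes = [A, B] →
    ∀ x y : X, (∃ S ∈ A, x ∈ S) → (∀ S ∈ A, y ∉ S) → Pref R r x y

/-- All indifference all winners (AIAW). -/
def AIAW [DecidableEq X] (R : SRSMap X) : Prop :=
  ∀ r : CoalRanking X, r.classes.length ≤ 1 →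
    (∀ x y : X, (∃ S ∈ r.domain, x ∈ S) → (∃ S ∈ r.domain, y ∈ S) → Ind R r x y) ∧
    (∀ x z : X, (∃ S ∈ r.domain, x ∈ S) → (∀ S ∈ r.domain, z ∉ S) → Pref R r x z)

/-- Independence of the decomposition of the worst sets (IDWS). -/
def IDWS [DecidableEq X] (R : SRSMap X) : Prop :=
  ∀ (r r' : CoalRanking X) (L G : List (Finset (Finset X))) (W : Finset (Finset X)),
    L ≠ [] → r.classes = L ++ [W] → r'.classes = L ++ G →
    G.foldr (· ∪ ·) ∅ = W →
    ∀ x y : X, Pref R r x y → Pref R r' x y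

/-- Independence of the addition of the worst sets (IAWS). -/
def IAWS [DecidableEq X] (R : SRSMap X) : Prop :=
  ∀ (r r' : CoalRanking X) (G : Finset (Finset X)),
    r'.classes = r.classes ++ [G] → (∀ S ∈ G, S ∉ r.domain) →
    ∀ x y : X, Pref R r x y → Pref R r' x y

/-- Tops-only (TO). -/
def TO (R : SRSMap X) : Prop :=
  ∀ (r r' : CoalRanking X) (A : Finset (Finset X)),
    r.classes.head? = some A → r'.classes.head? = some A → R r = R r'

/-- The dual S lex-cel `R^{DSL}`. -/
def dslexcel [DecidableEq X] : SRSMap X := fun r x y =>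
  lexGE ((thetaDot r y).reverse) ((thetaDot r x).reverse)

/-- The inverse dual S lex-cel `R^{IDSL}`. -/
def idslexcel [DecidableEq X] : SRSMap X := fun r x y => dslexcel r y x

/-- The vector `θ̃_≿(x)` used by the S lex-cel with precedence on unanimity. -/
def tildeTheta [DecidableEq X] (r : CoalRanking X) (x : X) : List ℕ :=
  r.classes.map (fun C => if cnt x C = C.card then 2 else if 0 < cnt x C then 1 else 0)

/-- The S lex-cel with a particular precedence on unanimity `R^{SLUN}`. -/
def slun [DecidableEq X] : SRSMap X := fun r x y =>
  lexGE (tildeTheta r x) (tildeTheta r y)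

/-- The S sum score `Σ_k sign(x_k)`. -/
def ssum [DecidableEq X] (r : CoalRanking X) (x : X) : ℕ := (thetaDot r x).sum

/-- The S sum rule with tie-breaking by S lex-cel `R^{SSUM,SL}`. -/
def ssumSL [DecidableEq X] : SRSMap X := fun r x y =>
  ssum r y < ssum r x ∨ (ssum r x = ssum r y ∧ slexcel r x y)

/-! ### Auxiliary lemmas for the IDSL theorem -/

section AuxIDSL

lemma lexGE_refl : ∀ a : List ℕ, lexGE a a
  | [] => trivial
  | _ :: as => Or.inr ⟨rfl, lexGE_refl as⟩

lemma lexGE_antisymm : ∀ {a b : List ℕ}, a.length = b.length →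
    lexGE a b → lexGE b a → a = b
  | [], [], _, _, _ => rfl
  | [], _ :: _, h, _, _ => by simp at h
  | _ :: _, [], h, _, _ => by simp at h
  | a :: as, b :: bs, h, hab, hba => by
    simp only [List.length_cons, Nat.add_right_cancel_iff] at h
    rcases (hab : b < a ∨ (a = b ∧ lexGE as bs)) with h1 | ⟨rfl, h1⟩
    · rcases (hba : a < b ∨ (b = a ∧ lexGE bs as)) with h2 | ⟨rfl, h2⟩
      · omega
      · omega
    · rcases (hba : a < a ∨ (a = a ∧ lexGE bs as)) with h2 | ⟨-, h2⟩
      · omega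
      · rw [lexGE_antisymm h h1 h2]

lemma lexGE_append : ∀ {a b : List ℕ}, a.length = b.length → ∀ (c d : List ℕ),
    (lexGE (a ++ c) (b ++ d) ↔ if a = b then lexGE c d else lexGE a b)
  | [], [], _, c, d => by simp
  | [], _ :: _, h, _, _ => by simp at h
  | _ :: _, [], h, _, _ => by simp at h
  | a :: as, b :: bs, h, c, d => by
    simp only [List.length_cons, Nat.add_right_cancel_iff] at h
    show (b < a ∨ (a = b ∧ lexGE (as ++ c) (bs ++ d))) ↔ _
    rw [lexGE_append h c d]
    by_cases hab : a = b
    · subst hab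
      by_cases ht : as = bs
      · subst ht
        simp [lexGE_refl]
      · have : (a :: as) ≠ (a :: bs) := by simpa using ht
        rw [if_neg ht, if_neg this]
        show _ ↔ (a < a ∨ (a = a ∧ lexGE as bs))
        constructor
        · rintro (h1 | ⟨-, h1⟩)
          · omega
          · exact Or.inr ⟨rfl, h1⟩
        · rintro (h1 | ⟨-, h1⟩)
          · omega
          · exact Or.inr ⟨rfl, h1⟩
    · have : (a :: as) ≠ (b :: bs) := by simp [hab]
      rw [if_neg this]
      show _ ↔ (b < a ∨ (a = b ∧ lexGE as bs))
      constructor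
      · rintro (h1 | ⟨h1, -⟩)
        · exact Or.inl h1
        · exact absurd h1 hab
      · rintro (h1 | ⟨h1, -⟩)
        · exact Or.inl h1
        · exact absurd h1 hab

variable {X : Type*}

lemma thetaDot_length [DecidableEq X] (r : CoalRanking X) (x : X) :
    (thetaDot r x).length = r.classes.length := by
  simp [thetaDot, theta]

lemma idsl_def [DecidableEq X] (r : CoalRanking X) (x y : X) :
    idslexcel r x y ↔ lexGE (thetaDot r x).reverse (thetaDot r y).reverse := Iff.rfl

lemma cnt_mapPerm [DecidableEq X] (σ : Equiv.Perm X) (x : X) (C : Finset (Finset X)) :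
    cnt (σ x) (C.image fun S => S.image σ) = cnt x C := by
  unfold cnt
  rw [Finset.filter_image]
  rw [Finset.card_image_of_injective _ (Finset.image_injective σ.injective)]
  congr 1
  ext S
  simp [Finset.mem_image, σ.injective.eq_iff]

lemma thetaDot_mapPerm [DecidableEq X] (σ : Equiv.Perm X) (r : CoalRanking X) (x : X) :
    thetaDot (r.mapPerm σ) (σ x) = thetaDot r x := by
  simp only [thetaDot, theta, CoalRanking.mapPerm, List.map_map]
  congr 1
  funext C
  simp [Function.comp, cnt_mapPerm]

theorem idsl_NT [DecidableEq X] : NT (idslexcel : SRSMap X) := by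
  intro σ r x y
  rw [idsl_def, idsl_def, thetaDot_mapPerm, thetaDot_mapPerm]

lemma ind_idsl_eq [DecidableEq X] {r : CoalRanking X} {x y : X}
    (h : Ind idslexcel r x y) : thetaDot r x = thetaDot r y := by
  have := lexGE_antisymm (a := (thetaDot r x).reverse) (b := (thetaDot r y).reverse)
    (by simp [thetaDot_length]) h.1 h.2
  exact List.reverse_injective this

lemma pref_concat {a b c d : List ℕ} (hlen : a.length = b.length)
    (H : (lexGE a b ∧ ¬ lexGE b a) ∨ (a = b ∧ lexGE c d ∧ ¬ lexGE d c)) :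
    lexGE (a ++ c) (b ++ d) ∧ ¬ lexGE (b ++ d) (a ++ c) := by
  rcases H with ⟨h1, h2⟩ | ⟨rfl, h1, h2⟩
  · have hab : a ≠ b := by
      rintro rfl
      exact h2 (lexGE_refl a)
    constructor
    · rw [lexGE_append hlen, if_neg hab]
      exact h1
    · rw [lexGE_append hlen.symm, if_neg (Ne.symm hab)]
      exact h2
  · constructor
    · rw [lexGE_append hlen, if_pos rfl]
      exact h1
    · rw [lexGE_append hlen.symm, if_pos rfl]
      exact h2

theorem idsl_CCON [DecidableEq X] : CCON (idslexcel : SRSMap X) := by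
  rintro r₁ r₂ r ⟨-, hcls⟩ x y
  have hrev : ∀ w : X, (thetaDot r w).reverse
      = (thetaDot r₂ w).reverse ++ (thetaDot r₁ w).reverse := by
    intro w
    simp [thetaDot, theta, hcls]
  have hlen : (thetaDot r₂ x).reverse.length = (thetaDot r₂ y).reverse.length := by
    simp [thetaDot_length]
  have toPref : ((lexGE (thetaDot r₂ x).reverse (thetaDot r₂ y).reverse ∧
        ¬ lexGE (thetaDot r₂ y).reverse (thetaDot r₂ x).reverse) ∨
      ((thetaDot r₂ x).reverse = (thetaDot r₂ y).reverse ∧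
        lexGE (thetaDot r₁ x).reverse (thetaDot r₁ y).reverse ∧
        ¬ lexGE (thetaDot r₁ y).reverse (thetaDot r₁ x).reverse)) →
      Pref idslexcel r x y := by
    intro H
    obtain ⟨p1, p2⟩ := pref_concat hlen H
    constructor
    · rw [idsl_def, hrev, hrev]
      exact p1
    · rw [idsl_def, hrev, hrev]
      exact p2
  refine ⟨?_, ?_, ?_, ?_⟩
  · intro hI1 hI2
    have h1 := ind_idsl_eq hI1
    have h2 := ind_idsl_eq hI2
    have hxy : (thetaDot r x).reverse = (thetaDot r y).reverse := by
      rw [hrev, hrev, h1, h2]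
    constructor
    · rw [idsl_def, hxy]
      exact lexGE_refl _
    · rw [idsl_def, hxy]
      exact lexGE_refl _
  · intro _ hP2
    exact toPref (Or.inl hP2)
  · intro hP1 hI2
    exact toPref (Or.inr ⟨by rw [ind_idsl_eq hI2], hP1⟩)
  · intro _ hP2
    exact toPref (Or.inl hP2)

theorem idsl_AIAW [DecidableEq X] : AIAW (idslexcel : SRSMap X) := by
  intro r hlen
  rcases hr : r.classes with _ | ⟨A, t⟩
  · have hdom : r.domain = ∅ := by simp [CoalRanking.domain, hr]
    constructor
    · rintro x y ⟨S, hS, -⟩ -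
      rw [hdom] at hS
      simp at hS
    · rintro x z ⟨S, hS, -⟩ -
      rw [hdom] at hS
      simp at hS
  · rcases t with _ | ⟨B, t⟩
    · have hdom : r.domain = A := by simp [CoalRanking.domain, hr]
      have hpos : ∀ w : X, (∃ S ∈ r.domain, w ∈ S) → thetaDot r w = [1] := by
        rintro w ⟨S, hS, hw⟩
        rw [hdom] at hS
        have : 0 < cnt w A :=
          Finset.card_pos.mpr ⟨S, Finset.mem_filter.mpr ⟨hS, hw⟩⟩
        simp [thetaDot, theta, hr, sgn, this]
      have hzero : ∀ w : X, (∀ S ∈ r.domain, w ∉ S) → thetaDot r w = [0] := by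
        intro w hw
        have : cnt w A = 0 := by
          rw [cnt, Finset.card_eq_zero, Finset.filter_eq_empty_iff]
          intro S hS
          exact hw S (by rwa [hdom])
        simp [thetaDot, theta, hr, sgn, this]
      constructor
      · intro x y hx hy
        constructor <;>
          · rw [idsl_def, hpos x hx, hpos y hy]
            exact lexGE_refl _
      · intro x z hx hz
        constructor
        · rw [idsl_def, hpos x hx, hzero z hz]
          exact Or.inl Nat.zero_lt_one
        · rw [idsl_def, hpos x hx, hzero z hz]
          rintro (h | ⟨h, -⟩) <;> omega
    · rw [hr] at hlen
      simp at hlen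

/-- The counterexample ranking `{y} ≻ {x}` for the failure of IAWS. -/
def exIAWS [DecidableEq X] (x y : X) (hxy : x ≠ y) : CoalRanking X where
  classes := [{({y} : Finset X)}, {({x} : Finset X)}]
  class_nonempty := by
    intro C hC
    simp only [List.mem_cons, List.not_mem_nil, or_false] at hC
    rcases hC with rfl | rfl <;> exact Finset.singleton_nonempty _
  coal_nonempty := by
    intro C hC S hS
    simp only [List.mem_cons, List.not_mem_nil, or_false] at hC
    rcases hC with rfl | rfl <;>
      · simp only [Finset.mem_singleton] at hS
        subst hS
        exact Finset.singleton_nonempty _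
  classes_disjoint := by
    refine List.Pairwise.cons ?_ (List.pairwise_singleton _ _)
    intro C hC
    simp only [List.mem_cons, List.not_mem_nil, or_false] at hC
    subst hC
    refine Finset.disjoint_singleton.mpr ?_
    simp [hxy.symm]

/-- The extended counterexample ranking `{y} ≻ {x} ≻ {y,z}`. -/
def exIAWS' [DecidableEq X] (x y z : X) (hxy : x ≠ y) (hxz : x ≠ z) (hyz : y ≠ z) :
    CoalRanking X where
  classes := [{({y} : Finset X)}, {({x} : Finset X)}, {({y, z} : Finset X)}]
  class_nonempty := by
    intro C hC
    simp only [List.mem_cons, List.not_mem_nil, or_false] at hC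
    rcases hC with rfl | rfl | rfl <;> exact Finset.singleton_nonempty _
  coal_nonempty := by
    intro C hC S hS
    simp only [List.mem_cons, List.not_mem_nil, or_false] at hC
    rcases hC with rfl | rfl | rfl <;>
      · simp only [Finset.mem_singleton] at hS
        subst hS
        first
          | exact Finset.singleton_nonempty _
          | exact Finset.insert_nonempty _ _
  classes_disjoint := by
    have h1 : ({y} : Finset X) ≠ {x} := by simp [hxy.symm]
    have h2 : ({y} : Finset X) ≠ {y, z} := by
      intro h
      have : z ∈ ({y} : Finset X) := h ▸ (by simp)
      simp at this
      exact hyz this.symm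
    have h3 : ({x} : Finset X) ≠ {y, z} := by
      intro h
      have : x ∈ ({y, z} : Finset X) := h ▸ (by simp)
      simp at this
      rcases this with h' | h'
      · exact hxy h'
      · exact hxz h'
    refine List.Pairwise.cons ?_ (List.Pairwise.cons ?_ (List.pairwise_singleton _ _))
    · intro C hC
      simp only [List.mem_cons, List.not_mem_nil, or_false] at hC
      rcases hC with rfl | rfl
      · exact Finset.disjoint_singleton.mpr h1
      · exact Finset.disjoint_singleton.mpr h2
    · intro C hC
      simp only [List.mem_cons, List.not_mem_nil, or_false] at hC
      subst hC
      exact Finset.disjoint_singleton.mpr h3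

end AuxIDSL

end SocRank

open SocRank

/-- the inverse dual S lex-cel satisfies NT, CCON and AIAW,
but does not satisfy IAWS. -/
theorem idslexcel_axioms {X : Type*} [DecidableEq X] [Fintype X]
    (hX : 3 ≤ Fintype.card X) :
    NT (idslexcel : SRSMap X) ∧ CCON (idslexcel : SRSMap X) ∧
      AIAW (idslexcel : SRSMap X) ∧ ¬ IAWS (idslexcel : SRSMap X) := by
  refine ⟨idsl_NT, idsl_CCON, idsl_AIAW, ?_⟩
  intro hIAWS
  obtain ⟨t, -, ht3⟩ :=
    Finset.exists_subset_card_eq (s := (Finset.univ : Finset X)) (n := 3)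
      (by simpa using hX)
  obtain ⟨x, y, z, hxy, hxz, hyz, -⟩ := Finset.card_eq_three.mp ht3
  set r := exIAWS x y hxy with hrdef
  set r' := exIAWS' x y z hxy hxz hyz with hr'def
  have hcls : r.classes = [{({y} : Finset X)}, {({x} : Finset X)}] := rfl
  have hcls' : r'.classes
      = [{({y} : Finset X)}, {({x} : Finset X)}, {({y, z} : Finset X)}] := rfl
  -- basic counting facts
  have cxx : cnt x ({({x} : Finset X)} : Finset (Finset X)) = 1 := by
    simp [cnt, Finset.filter_singleton]
  have cxy : cnt x ({({y} : Finset X)} : Finset (Finset X)) = 0 := by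
    simp [cnt, Finset.filter_singleton, hxy]
  have cyy : cnt y ({({y} : Finset X)} : Finset (Finset X)) = 1 := by
    simp [cnt, Finset.filter_singleton]
  have cyx : cnt y ({({x} : Finset X)} : Finset (Finset X)) = 0 := by
    simp [cnt, Finset.filter_singleton, hxy.symm]
  have cxyz : cnt x ({({y, z} : Finset X)} : Finset (Finset X)) = 0 := by
    simp [cnt, Finset.filter_singleton, hxy, hxz]
  have cyyz : cnt y ({({y, z} : Finset X)} : Finset (Finset X)) = 1 := by
    simp [cnt, Finset.filter_singleton]
  have tdx : thetaDot r x = [0, 1] := by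
    simp [thetaDot, theta, hcls, sgn, cxx, cxy]
  have tdy : thetaDot r y = [1, 0] := by
    simp [thetaDot, theta, hcls, sgn, cyy, cyx]
  have tdx' : thetaDot r' x = [0, 1, 0] := by
    simp [thetaDot, theta, hcls', sgn, cxx, cxy, cxyz]
  have tdy' : thetaDot r' y = [1, 0, 1] := by
    simp [thetaDot, theta, hcls', sgn, cyy, cyx, cyyz]
  -- `x` is strictly preferred to `y` in `r`
  have hPref : Pref idslexcel r x y := by
    constructor
    · rw [idsl_def, tdx, tdy]
      exact Or.inl Nat.zero_lt_one
    · rw [idsl_def, tdx, tdy]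
      rintro (h | ⟨h, -⟩) <;> omega
  -- the new worst class is disjoint from the old domain
  have hG : ∀ S ∈ ({({y, z} : Finset X)} : Finset (Finset X)), S ∉ r.domain := by
    intro S hS
    simp only [Finset.mem_singleton] at hS
    subst hS
    intro hmem
    have : ({y, z} : Finset X) = {y} ∨ ({y, z} : Finset X) = {x} := by
      simpa [CoalRanking.domain, hcls] using hmem
    rcases this with h | h
    · have : z ∈ ({y} : Finset X) := h ▸ (by simp)
      simp at this
      exact hyz this.symm
    · have : y ∈ ({x} : Finset X) := h ▸ (by simp)
      simp at this
      exact hxy this.symm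
  have hPref' := hIAWS r r' ({({y, z} : Finset X)} : Finset (Finset X)) rfl hG x y hPref
  -- but `x` is no longer weakly preferred to `y` in `r'`
  have : idslexcel r' x y := hPref'.1
  rw [idsl_def, tdx', tdy'] at this
  rcases this with h | ⟨h, -⟩ <;> omega
end

section
/- The S lex-cel with a particular precedence on unanimity R^SLUN satisfies neutrality (NT), concatenation consistency (CCON), and independence of the decomposition of the worst sets (IDWS), but does not satisfy all indifference all winners (AIAW). -/
open SocRank

/-!
Comparing `θ̃`-vectors by `≥^L` is the lexicographic order on `List ℕ`, so `I` and `P` of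
`R^SLUN` are equality and strict order of these vectors. A concatenation sum concatenates the
vectors, which gives CCON, and renaming individuals does not change them, which gives NT.

For IDWS, suppose `x` beats `y` only at the worst class `W`. Either `y` meets no coalition of
`W` while `x` meets one, or `x` lies in all of them while `y` misses one. Either way `ỹ ≤ x̃` on
every block of a decomposition of `W`, strictly on the block containing that coalition.

AIAW fails on the one-class ranking `{{x, y}, {x}}`, where `x̃ = 2` but `ỹ = 1`.
-/

namespace List

theorem append_lt_append_iff_of_length_eq {p q : List ℕ} (hpq : p.length = q.length)
    {s t : List ℕ} : p ++ s < q ++ t ↔ p < q ∨ p = q ∧ s < t := by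
  induction p generalizing q with
  | nil => cases q <;> simp_all
  | cons a p ih =>
    cases q with
    | nil => simp at hpq
    | cons b q =>
      simp only [cons_append, cons_lt_cons_iff, ih (by simpa using hpq), cons.injEq]
      tauto

theorem map_lt_map_of_le_of_exists_lt {α : Type*} {G : List α} {f g : α → ℕ}
    (hle : ∀ a ∈ G, f a ≤ g a) (hlt : ∃ a ∈ G, f a < g a) : G.map f < G.map g := by
  induction G with
  | nil => simp at hlt
  | cons a G ih =>
    rw [map_cons, map_cons, cons_lt_cons_iff]
    rcases (hle a mem_cons_self).lt_or_eq with h | h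
    · exact Or.inl h
    · refine Or.inr ⟨h, ih (fun b hb => hle b (mem_cons_of_mem a hb)) ?_⟩
      obtain ⟨b, hb, hfg⟩ := hlt
      rcases mem_cons.mp hb with rfl | hb
      · omega
      · exact ⟨b, hb, hfg⟩

theorem mem_foldr_union {α : Type*} [DecidableEq α] {G : List (Finset α)} {a : α} :
    a ∈ G.foldr (· ∪ ·) ∅ ↔ ∃ Γ ∈ G, a ∈ Γ := by
  induction G <;> simp [*]

end List

namespace SocRank

theorem lexGE_iff_le : ∀ {a b : List ℕ}, lexGE a b ↔ b ≤ a
  | _, [] => by simp [lexGE, ← not_lt]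
  | [], _ :: _ => by simp [lexGE, ← not_lt]
  | a :: as, b :: bs => by
    rw [lexGE, ← not_lt, List.cons_lt_cons_iff, lexGE_iff_le, ← not_lt]
    grind

variable {X : Type*}

section LexScore

variable {R : SRSMap X} {v : CoalRanking X → X → List ℕ}

theorem ind_iff_of_lex (hR : ∀ r x y, R r x y ↔ v r y ≤ v r x) {r : CoalRanking X} {x y : X} :
    Ind R r x y ↔ v r x = v r y := by
  rw [Ind, hR, hR, eq_comm]
  exact le_antisymm_iff.symm

theorem pref_iff_of_lex (hR : ∀ r x y, R r x y ↔ v r y ≤ v r x) {r : CoalRanking X} {x y : X} :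
    Pref R r x y ↔ v r y < v r x := by
  rw [Pref, hR, hR, not_le]
  exact ⟨And.right, fun h => ⟨h.le, h⟩⟩

theorem consistentAt_of_lex_append (hR : ∀ r x y, R r x y ↔ v r y ≤ v r x)
    {r₁ r₂ r : CoalRanking X} (hlen : ∀ x y, (v r₁ x).length = (v r₁ y).length)
    (hv : ∀ x, v r x = v r₁ x ++ v r₂ x) : ConsistentAt R r₁ r₂ r := by
  intro x y
  simp only [ind_iff_of_lex hR, pref_iff_of_lex hR, hv,
    List.append_lt_append_iff_of_length_eq (hlen y x)]
  exact ⟨fun h₁ h₂ => by rw [h₁, h₂], fun h₁ h₂ => Or.inr ⟨h₁.symm, h₂⟩,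
    fun h₁ _ => Or.inl h₁, fun h₁ _ => Or.inl h₁⟩

end LexScore

variable [DecidableEq X]

theorem cnt_pos_iff {x : X} {C : Finset (Finset X)} : 0 < cnt x C ↔ ∃ S ∈ C, x ∈ S := by
  simp [cnt, Finset.card_pos, Finset.filter_nonempty_iff]

theorem cnt_eq_card_iff {x : X} {C : Finset (Finset X)} : cnt x C = C.card ↔ ∀ S ∈ C, x ∈ S := by
  rw [cnt, Finset.card_filter_eq_iff]

/-- The coordinate `z̃_k` of `θ̃_≿(z)` at the class `C = Σ_k`. -/
def tildeCoord (x : X) (C : Finset (Finset X)) : ℕ :=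
  if cnt x C = C.card then 2 else if 0 < cnt x C then 1 else 0

theorem tildeTheta_eq_map (r : CoalRanking X) (x : X) :
    tildeTheta r x = r.classes.map (tildeCoord x) := rfl

theorem tildeCoord_le_two (x : X) (C : Finset (Finset X)) : tildeCoord x C ≤ 2 := by
  unfold tildeCoord
  split_ifs <;> omega

theorem tildeCoord_eq_two_iff {x : X} {C : Finset (Finset X)} :
    tildeCoord x C = 2 ↔ ∀ S ∈ C, x ∈ S := by
  rw [← cnt_eq_card_iff, tildeCoord]
  split_ifs <;> simp_all

theorem tildeCoord_pos_iff {x : X} {C : Finset (Finset X)} (hC : C.Nonempty) :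
    0 < tildeCoord x C ↔ ∃ S ∈ C, x ∈ S := by
  rw [← cnt_pos_iff, tildeCoord]
  have := hC.card_pos
  split_ifs <;> omega

section Refinement

variable {x y : X} {W Γ : Finset (Finset X)}

theorem tildeCoord_eq_two_of_subset (hΓW : Γ ⊆ W) (hx : tildeCoord x W = 2) :
    tildeCoord x Γ = 2 :=
  tildeCoord_eq_two_iff.mpr fun S hS => tildeCoord_eq_two_iff.mp hx S (hΓW hS)

theorem tildeCoord_eq_zero_of_subset (hΓ : Γ.Nonempty) (hΓW : Γ ⊆ W)
    (hx : tildeCoord x W = 0) : tildeCoord x Γ = 0 := by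
  rw [← Nat.le_zero, ← not_lt, tildeCoord_pos_iff hΓ]
  rw [← Nat.le_zero, ← not_lt, tildeCoord_pos_iff (hΓ.mono hΓW)] at hx
  exact fun ⟨S, hS, hxS⟩ => hx ⟨S, hΓW hS, hxS⟩

theorem tildeCoord_eq_two_of_lt (h : tildeCoord y W < tildeCoord x W) (hy : tildeCoord y W ≠ 0) :
    tildeCoord x W = 2 := by
  have := tildeCoord_le_two x W
  omega

theorem tildeCoord_le_of_subset (h : tildeCoord y W < tildeCoord x W) (hΓ : Γ.Nonempty)
    (hΓW : Γ ⊆ W) : tildeCoord y Γ ≤ tildeCoord x Γ := by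
  by_cases hy : tildeCoord y W = 0
  · rw [tildeCoord_eq_zero_of_subset hΓ hΓW hy]
    exact Nat.zero_le _
  · rw [tildeCoord_eq_two_of_subset hΓW (tildeCoord_eq_two_of_lt h hy)]
    exact tildeCoord_le_two y Γ

theorem exists_mem_forall_tildeCoord_lt (h : tildeCoord y W < tildeCoord x W) :
    ∃ S ∈ W, ∀ Γ, S ∈ Γ → Γ ⊆ W → tildeCoord y Γ < tildeCoord x Γ := by
  by_cases hy : tildeCoord y W = 0
  · have hW : W.Nonempty := by
      by_contra hW
      simp [Finset.not_nonempty_iff_eq_empty.mp hW, tildeCoord, cnt] at hy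
    obtain ⟨S, hS, hxS⟩ := (tildeCoord_pos_iff (x := x) hW).mp (by omega)
    refine ⟨S, hS, fun Γ hSΓ hΓW => ?_⟩
    rw [tildeCoord_eq_zero_of_subset ⟨S, hSΓ⟩ hΓW hy]
    exact (tildeCoord_pos_iff ⟨S, hSΓ⟩).mpr ⟨S, hSΓ, hxS⟩
  · have hx := tildeCoord_eq_two_of_lt h hy
    obtain ⟨S, hS, hyS⟩ : ∃ S ∈ W, y ∉ S := by
      by_contra! hyW
      rw [tildeCoord_eq_two_iff.mpr hyW] at h
      omega
    refine ⟨S, hS, fun Γ hSΓ hΓW => ?_⟩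
    rw [tildeCoord_eq_two_of_subset hΓW hx]
    have hy2 : tildeCoord y Γ ≠ 2 := fun hy2 => hyS (tildeCoord_eq_two_iff.mp hy2 S hSΓ)
    have := tildeCoord_le_two y Γ
    omega

end Refinement

theorem map_tildeCoord_lt_of_foldr_union_eq {x y : X} {W : Finset (Finset X)}
    {G : List (Finset (Finset X))} (hG : ∀ Γ ∈ G, Γ.Nonempty) (hGW : G.foldr (· ∪ ·) ∅ = W)
    (h : tildeCoord y W < tildeCoord x W) : G.map (tildeCoord y) < G.map (tildeCoord x) := by
  have hsub : ∀ Γ ∈ G, Γ ⊆ W := fun Γ hΓ S hS => hGW ▸ List.mem_foldr_union.mpr ⟨Γ, hΓ, hS⟩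
  refine List.map_lt_map_of_le_of_exists_lt
    (fun Γ hΓ => tildeCoord_le_of_subset h (hG Γ hΓ) (hsub Γ hΓ)) ?_
  obtain ⟨S, hS, hlt⟩ := exists_mem_forall_tildeCoord_lt h
  obtain ⟨Γ, hΓ, hSΓ⟩ := List.mem_foldr_union.mp (hGW ▸ hS)
  exact ⟨Γ, hΓ, hlt Γ hSΓ (hsub Γ hΓ)⟩

theorem slun_iff (r : CoalRanking X) (x y : X) :
    slun r x y ↔ tildeTheta r y ≤ tildeTheta r x :=
  lexGE_iff_le

theorem tildeTheta_mapPerm (σ : Equiv.Perm X) (r : CoalRanking X) (x : X) :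
    tildeTheta (r.mapPerm σ) (σ x) = tildeTheta r x := by
  have him : Function.Injective (fun S : Finset X => S.image σ) :=
    Finset.image_injective σ.injective
  have hcnt (C : Finset (Finset X)) : cnt (σ x) (C.image (·.image σ)) = cnt x C := by
    rw [cnt, Finset.filter_image, Finset.card_image_of_injective _ him]
    simp [cnt, σ.injective.eq_iff]
  simp only [tildeTheta_eq_map, CoalRanking.mapPerm, List.map_map]
  refine List.map_congr_left fun C _ => ?_
  simp only [Function.comp, tildeCoord, hcnt, Finset.card_image_of_injective _ him]

theorem nt_slun : NT (slun : SRSMap X) := by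
  intro σ r x y
  simp only [slun_iff, tildeTheta_mapPerm]

theorem ccon_slun : CCON (slun : SRSMap X) := by
  rintro r₁ r₂ r ⟨-, hr⟩
  exact consistentAt_of_lex_append slun_iff
    (fun _ _ => by simp [tildeTheta_eq_map]) (fun _ => by simp [tildeTheta_eq_map, hr])

theorem idws_slun : IDWS (slun : SRSMap X) := by
  intro r r' L G W _ hr hr' hGW x y
  have hG : ∀ Γ ∈ G, Γ.Nonempty := fun Γ hΓ => r'.class_nonempty Γ (by simp [hr', hΓ])
  have hlen : (L.map (tildeCoord y)).length = (L.map (tildeCoord x)).length := by simp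
  simp only [pref_iff_of_lex slun_iff, tildeTheta_eq_map, hr, hr', List.map_append,
    List.map_cons, List.map_nil, List.append_lt_append_iff_of_length_eq hlen,
    List.cons_lt_cons_iff, List.not_lt_nil, and_false, or_false]
  exact Or.imp_right fun ⟨hL, hW⟩ => ⟨hL, map_tildeCoord_lt_of_foldr_union_eq hG hGW hW⟩

def CoalRanking.ofClass (C : Finset (Finset X)) (hC : C.Nonempty)
    (hS : ∀ S ∈ C, S.Nonempty) : CoalRanking X where
  classes := [C]
  class_nonempty := by simpa using hC
  coal_nonempty := by simpa using hS
  classes_disjoint := List.pairwise_singleton _ _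

theorem not_aiaw_slun {x y : X} (hxy : x ≠ y) : ¬ AIAW (slun : SRSMap X) := by
  intro h
  set C : Finset (Finset X) := {{x, y}, {x}}
  let r := CoalRanking.ofClass C ⟨{x}, by simp [C]⟩ (by simp [C])
  have hdom : r.domain = C := by simp [r, CoalRanking.ofClass, CoalRanking.domain]
  have hxy_ind := (h r (by simp [r, CoalRanking.ofClass])).1 x y
    ⟨{x, y}, by simp [hdom, C], by simp⟩ ⟨{x, y}, by simp [hdom, C], by simp⟩
  have hx : tildeCoord x C = 2 := tildeCoord_eq_two_iff.mpr (by simp [C])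
  have hy : tildeCoord y C ≠ 2 := fun hy =>
    hxy.symm (by simpa [C] using tildeCoord_eq_two_iff.mp hy {x})
  rw [ind_iff_of_lex slun_iff] at hxy_ind
  simp [tildeTheta_eq_map, r, CoalRanking.ofClass, hx] at hxy_ind
  exact hy hxy_ind.symm

end SocRank

/-- the S lex-cel with precedence on unanimity satisfies NT, CCON
and IDWS, but does not satisfy AIAW. -/
theorem slun_axioms {X : Type*} [DecidableEq X] [Fintype X]
    (hX : 3 ≤ Fintype.card X) :
    NT (slun : SRSMap X) ∧ CCON (slun : SRSMap X) ∧ IDWS (slun : SRSMap X) ∧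
      ¬ AIAW (slun : SRSMap X) := by
  obtain ⟨x, y, hxy⟩ := Fintype.exists_pair_of_one_lt_card (by omega : 1 < Fintype.card X)
  exact ⟨nt_slun, ccon_slun, idws_slun, not_aiaw_slun hxy⟩
end
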